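/- Let θ be an alternating (k+1)-multilinear form on a vector space V vanishing on a subspace E. For a hyperplane H ⊂ E (cut out by ξ ∈ E*, ξ ≠ 0) and a vector v ∈ V, the subspace H + span{v} is annihilated by θ if and only if ξ ∧ (v ⌟ θ) restricted to E vanishes, assuming θ already vanishes when all arguments are in E. -/

import Mathlib

/-!
Let `A` be the alternating `(k+1)`-form `e ↦ ∑ⱼ (-1)ʲ ξ(eⱼ) θ(v, e₀,…,êⱼ,…,e_k)` on `E`, i.e.
`alternatizeUncurryFin` of `x ↦ ξ x • (v ⌟ θ)|_E`; the right-hand side says `A = 0`.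

An alternating form vanishes on `K + span{w}` iff it vanishes on `K` and on the tuples
`(w, k₁,…,k_n)` with `kᵢ ∈ K`: by multilinearity it suffices to test tuples from `K ∪ {w}`, and such
a tuple containing `w` twice is degenerate, while one containing `w` once is a signed reordering of
`(w, k₁,…,k_n)`. Applied to `θ` on `H + span{v}` (where `θ|_H = 0` since `H ⊆ E`) and to `A` on
`E = ker ξ + span{x}` with `ξ x ≠ 0` (where `A|_{ker ξ} = 0` and `A(x, h) = ξ(x) θ(v, h)`), both
sides become: `θ(v, h₁,…,h_k) = 0` for all `hᵢ ∈ H`.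
-/

open Submodule

namespace MultilinearMap

variable {R ι N : Type*} {M : ι → Type*} [Semiring R] [∀ i, AddCommMonoid (M i)]
  [∀ i, Module R (M i)] [AddCommMonoid N] [Module R N]

theorem map_eq_zero_of_forall_mem_span [Fintype ι] [DecidableEq ι] (f : MultilinearMap R M N)
    {S : ∀ i, Set (M i)} (hS : ∀ u, (∀ i, u i ∈ S i) → f u = 0) {u : ∀ i, M i}
    (hu : ∀ i, u i ∈ span R (S i)) : f u = 0 := by
  suffices ∀ s : Finset ι, ∀ u : ∀ i, M i, (∀ i ∉ s, u i ∈ S i) →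
      (∀ i, u i ∈ span R (S i)) → f u = 0 from
    this Finset.univ u (by simp) hu
  intro s
  induction s using Finset.induction_on with
  | empty => exact fun u hS' _ => hS u fun i => hS' i (Finset.notMem_empty i)
  | insert a s _ ih =>
    intro u hout hspan
    have hker : S a ⊆ LinearMap.ker (f.toLinearMap u a) := fun x hx => by
      refine ih _ (fun i hi => ?_) (fun i => ?_)
      · rcases eq_or_ne i a with rfl | hia
        · simpa using hx
        · simpa [hia] using hout i (by simp [hia, hi])
      · rcases eq_or_ne i a with rfl | hia
        · simpa using subset_span hx
        · simpa [hia] using hspan i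
    simpa using span_le.mpr hker (hspan a)

end MultilinearMap

namespace AlternatingMap

section CommRing

variable {R M N : Type*} [CommRing R] [AddCommGroup M] [Module R M] [AddCommGroup N] [Module R N]
  {n : ℕ}

theorem map_eq_zero_on_sup_span_singleton_iff (f : M [⋀^Fin (n + 1)]→ₗ[R] N)
    (K : Submodule R M) (w : M) :
    (∀ u, (∀ i, u i ∈ K ⊔ span R {w}) → f u = 0) ↔
      (∀ u, (∀ i, u i ∈ K) → f u = 0) ∧
        ∀ u : Fin n → M, (∀ i, u i ∈ K) → f (Fin.cons w u) = 0 := by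
  refine ⟨fun h => ⟨fun u hu => h u fun i => mem_sup_left (hu i), fun u hu => h _ fun i => ?_⟩,
    fun ⟨hK, hw⟩ u hu => ?_⟩
  · refine Fin.cases ?_ (fun i => ?_) i
    · exact mem_sup_right (mem_span_singleton_self w)
    · exact mem_sup_left (hu i)
  refine f.toMultilinearMap.map_eq_zero_of_forall_mem_span (S := fun _ => (K : Set M) ∪ {w})
    (fun u hu => ?_) fun i => by rw [span_union, span_eq]; exact hu i
  change f u = 0
  by_cases hK' : ∀ i, u i ∈ K
  · exact hK u hK'
  obtain ⟨j, hj⟩ := not_forall.mp hK'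
  have huj : u j = w := (hu j).resolve_left hj
  by_cases hrest : ∀ i, j.removeNth u i ∈ K
  · rw [← j.insertNth_self_removeNth u, map_insertNth, huj]
    exact (congrArg _ (hw _ hrest)).trans (smul_zero _)
  obtain ⟨i, hi⟩ := not_forall.mp hrest
  have hui : u (j.succAbove i) = w := (hu _).resolve_left hi
  exact f.map_eq_zero_of_eq u (hui.trans huj.symm) (j.succAbove_ne i)

variable (ξ : M →ₗ[R] R) (φ : M [⋀^Fin n]→ₗ[R] N)

theorem alternatizeUncurryFin_smulRight_eq_zero_of_forall_mem_ker {u : Fin (n + 1) → M}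
    (hu : ∀ i, ξ (u i) = 0) : alternatizeUncurryFin (ξ.smulRight φ) u = 0 := by
  simp [alternatizeUncurryFin_apply, hu]

theorem alternatizeUncurryFin_smulRight_cons (x : M) {g : Fin n → M} (hg : ∀ i, ξ (g i) = 0) :
    alternatizeUncurryFin (ξ.smulRight φ) (Fin.cons x g) = ξ x • φ g := by
  simp [alternatizeUncurryFin_apply, Fin.sum_univ_succ, hg]

end CommRing

variable {K M N : Type*} [Field K] [AddCommGroup M] [Module K M] [AddCommGroup N] [Module K N]
  {n : ℕ}

theorem alternatizeUncurryFin_smulRight_eq_zero_iff {ξ : M →ₗ[K] K} (hξ : ξ ≠ 0)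
    (φ : M [⋀^Fin n]→ₗ[K] N) :
    alternatizeUncurryFin (ξ.smulRight φ) = 0 ↔
      ∀ g : Fin n → M, (∀ i, ξ (g i) = 0) → φ g = 0 := by
  obtain ⟨x, hx⟩ : ∃ x, ξ x ≠ 0 := by
    by_contra! h
    exact hξ (LinearMap.ext h)
  have htop : LinearMap.ker ξ ⊔ span K {x} = ⊤ := by
    rw [sup_comm, LinearMap.span_singleton_sup_ker_eq_top ξ hx]
  have hiff := map_eq_zero_on_sup_span_singleton_iff
    (alternatizeUncurryFin (ξ.smulRight φ)) (LinearMap.ker ξ) x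
  simp only [htop, mem_top, implies_true, true_implies, LinearMap.mem_ker] at hiff
  simp only [AlternatingMap.ext_iff, AlternatingMap.zero_apply]
  rw [hiff, and_iff_right fun u => alternatizeUncurryFin_smulRight_eq_zero_of_forall_mem_ker ξ φ]
  refine forall_congr' fun g => forall_congr' fun hg => ?_
  rw [alternatizeUncurryFin_smulRight_cons ξ φ x hg, smul_eq_zero, or_iff_right hx]

end AlternatingMap

/-- Let `θ` be an alternating `(k+1)`-form on `V` vanishing on a subspace `E`.
For a hyperplane `H = ker ξ ∩ E` of `E` (with `ξ ∈ E*` nonzero) and a vector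
`v ∈ V`, the subspace `H + span{v}` is annihilated by `θ` if and only if
`ξ ∧ (v ⌟ θ)` restricted to `E` vanishes, i.e. for all `e₁,…,e_{k+1} ∈ E`,
`Σⱼ (−1)^{j+1} ξ(eⱼ) θ(v, e₁,…,êⱼ,…,e_{k+1}) = 0`. -/
theorem hyperplane_extension_iff_symbol {V : Type*} [AddCommGroup V]
    [Module ℝ V] (k : ℕ) (θ : V [⋀^Fin (k + 1)]→ₗ[ℝ] ℝ)
    (E : Submodule ℝ V)
    (hθE : ∀ e : Fin (k + 1) → V, (∀ i, e i ∈ E) → θ e = 0)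
    (ξ : Module.Dual ℝ E) (hξ : ξ ≠ 0) (v : V) :
    (∀ u : Fin (k + 1) → V,
        (∀ i, u i ∈ (LinearMap.ker ξ).map E.subtype ⊔ Submodule.span ℝ {v}) →
        θ u = 0)
      ↔
    (∀ e : Fin (k + 1) → E,
        ∑ j : Fin (k + 1), (-1 : ℝ) ^ ((j : ℕ) + 1) * ξ (e j) *
          θ (Fin.cons v (j.removeNth fun i => (e i : V))) = 0) := by
  set φ := (θ.curryLeft v).compLinearMap E.subtype
  have hsymbol : (∀ e : Fin (k + 1) → E,
        ∑ j : Fin (k + 1), (-1 : ℝ) ^ ((j : ℕ) + 1) * ξ (e j) *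
          θ (Fin.cons v (j.removeNth fun i => (e i : V))) = 0) ↔
      AlternatingMap.alternatizeUncurryFin (ξ.smulRight φ) = 0 := by
    simp only [AlternatingMap.ext_iff, AlternatingMap.zero_apply]
    refine forall_congr' fun e => ?_
    rw [AlternatingMap.alternatizeUncurryFin_apply, ← neg_eq_zero, ← Finset.sum_neg_distrib]
    refine Eq.congr_left (Finset.sum_congr rfl fun j _ => ?_)
    rw [LinearMap.smulRight_apply, AlternatingMap.smul_apply, smul_eq_mul, zsmul_eq_mul]
    change _ = _ * (_ * θ (Fin.cons v (j.removeNth fun i => (e i : V))))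
    push_cast
    ring
  rw [hsymbol, AlternatingMap.alternatizeUncurryFin_smulRight_eq_zero_iff hξ,
    AlternatingMap.map_eq_zero_on_sup_span_singleton_iff,
    and_iff_right fun u hu => hθE u fun i => map_subtype_le E _ (hu i)]
  refine ⟨fun h g hg => h _ fun i => mem_map_of_mem (hg i), fun h u hu => ?_⟩
  choose g hg hgu using fun i => mem_map.mp (hu i)
  obtain rfl : (fun i => (g i : V)) = u := funext hgu
  exact h g hg
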